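/- arXiv:1201.4867 — 2 statements merged into one kernel-verified Lean document; each statement's English description precedes it below -/
import Mathlib

section
/- For every additive subgroup H of G, the double orthogonal subgroup satisfies (H^⊥)^⊥ = H. -/
/-- The character `χ_g` of the finite abelian group `G = ∀ i, ZMod (d i)`. -/
noncomputable def chi {m : ℕ} {d : Fin m → ℕ} (g h : ∀ i, ZMod (d i)) : ℂ :=
  Complex.exp (2 * Real.pi * Complex.I *
    ∑ i, ((g i).val : ℂ) * ((h i).val : ℂ) / ((d i : ℕ) : ℂ))

/-- The orthogonal set of a set of group elements: all `g` whose character is trivial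
on the set. -/
def orthSet {m : ℕ} {d : Fin m → ℕ} (S : Set (∀ i, ZMod (d i))) : Set (∀ i, ZMod (d i)) :=
  {g | ∀ h ∈ S, chi g h = 1}

/-- `chi g` bundled as an additive character. -/
noncomputable def chiChar {m : ℕ} {d : Fin m → ℕ} [∀ i, NeZero (d i)]
    (g : ∀ i, ZMod (d i)) : AddChar (∀ i, ZMod (d i)) ℂ where
  toFun h := ∏ i, (AddChar.zmod (d i) (g i) (h i) : ℂ)
  map_zero_eq_one' := by simp
  map_add_eq_mul' a b := by
    rw [← Finset.prod_mul_distrib]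
    refine Finset.prod_congr rfl fun i _ => ?_
    rw [Pi.add_apply, AddChar.map_add_eq_mul, Circle.coe_mul]

lemma chi_eq_chiChar {m : ℕ} {d : Fin m → ℕ} [∀ i, NeZero (d i)]
    (g h : ∀ i, ZMod (d i)) : chi g h = chiChar g h := by
  have key : ∀ i : Fin m, (AddChar.zmod (d i) (g i) (h i) : ℂ) =
      Complex.exp (2 * Real.pi * Complex.I *
        (((g i).val : ℂ) * ((h i).val : ℂ) / ((d i : ℕ) : ℂ))) := by
    intro i
    have h1 : ((((g i).val : ℤ) : ZMod (d i))) = g i := by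
      push_cast [ZMod.natCast_val, ZMod.cast_id]; rfl
    have h2 : ((((h i).val : ℤ) : ZMod (d i))) = h i := by
      push_cast [ZMod.natCast_val, ZMod.cast_id]; rfl
    have hz := AddChar.zmod_intCast (d i) ((g i).val : ℤ) ((h i).val : ℤ)
    rw [h1, h2] at hz
    rw [hz, Circle.coe_exp]
    push_cast
    ring_nf
  simp only [chi, chiChar, AddChar.coe_mk, key, ← Complex.exp_sum, Finset.mul_sum]

lemma chi_comm {m : ℕ} {d : Fin m → ℕ} (g h : ∀ i, ZMod (d i)) : chi g h = chi h g := by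
  simp only [chi]
  congr 1
  congr 1
  exact Finset.sum_congr rfl fun i _ => by ring

lemma chiChar_injective {m : ℕ} {d : Fin m → ℕ} [∀ i, NeZero (d i)] :
    Function.Injective (chiChar (m := m) (d := d)) := by
  intro g g' hgg
  funext i
  have key : ∀ x : ZMod (d i), AddChar.zmod (d i) (g i) x = AddChar.zmod (d i) (g' i) x := by
    intro x
    have := DFunLike.congr_fun hgg (Pi.single i x)
    simp only [chiChar, AddChar.coe_mk] at this
    rw [Finset.prod_eq_single i (fun j _ hj => by simp [Pi.single_eq_of_ne hj])
      (by simp), Finset.prod_eq_single i (fun j _ hj => by simp [Pi.single_eq_of_ne hj])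
      (by simp), Pi.single_eq_same, Circle.coe_inj] at this
    exact this
  exact AddChar.zmod_inj.mp (DFunLike.ext _ _ key)

lemma chiChar_surjective {m : ℕ} {d : Fin m → ℕ} [∀ i, NeZero (d i)] :
    Function.Surjective (chiChar (m := m) (d := d)) := by
  have : Fintype (AddChar (∀ i, ZMod (d i)) ℂ) := Fintype.ofFinite _
  exact ((Fintype.bijective_iff_injective_and_card _).mpr
    ⟨chiChar_injective, by convert (AddChar.card_eq (α := ∀ i, ZMod (d i))).symm using 2⟩).surjective

/-- For every additive subgroup `H` of `G`, the double orthogonal satisfies `(H^⊥)^⊥ = H`. -/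
theorem stmt_1 (m : ℕ) (hm : 0 < m) (d : Fin m → ℕ) [∀ i, NeZero (d i)]
    (H : AddSubgroup (∀ i, ZMod (d i))) :
    orthSet (orthSet (H : Set (∀ i, ZMod (d i)))) = (H : Set (∀ i, ZMod (d i))) := by
  ext g
  constructor
  · intro hg
    by_contra hgH
    -- find a character trivial on H but not at g
    have hq : (QuotientAddGroup.mk' H g) ≠ 0 := by
      simpa [QuotientAddGroup.eq_zero_iff] using hgH
    obtain ⟨ψ, hψ⟩ := AddChar.exists_apply_ne_zero.mpr hq
    set φ := ψ.compAddMonoidHom (QuotientAddGroup.mk' H) with hφ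
    obtain ⟨x, hx⟩ := chiChar_surjective φ
    have hxorth : x ∈ orthSet (H : Set (∀ i, ZMod (d i))) := by
      intro h hh
      rw [chi_eq_chiChar, hx]
      simp only [φ, AddChar.compAddMonoidHom_apply]
      have h0 : ((QuotientAddGroup.mk' H) h) = 0 := (QuotientAddGroup.eq_zero_iff h).mpr hh
      rw [h0, AddChar.map_zero_eq_one]
    have h1 : chi g x = 1 := hg x hxorth
    rw [chi_comm, chi_eq_chiChar, hx] at h1
    exact hψ h1
  · intro hgH x hx
    rw [chi_comm]
    exact hx g hgH
end

section
/- Let K be an additive subgroup of G and suppose ψ : G → ℂ satisfies χ_u(g) · ψ(g + v) = ψ(g) for all u ∈ K^⊥, all v ∈ K and all g ∈ G (i.e. ψ is a common +1 eigenvector of all operators Z(u)·X(v) with u ∈ K^⊥ and v ∈ K). Then ψ is proportional to the indicator function of K: there exists c ∈ ℂ such that ψ(g) = c for every g ∈ K and ψ(g) = 0 for every g ∉ K. -/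
section Aux

variable {m : ℕ} {d : Fin m → ℕ} [∀ i, NeZero (d i)]

lemma chi_eq_prod (u x : ∀ i, ZMod (d i)) :
    chi u x = ∏ i, ZMod.stdAddChar (u i * x i) := by
  unfold chi
  rw [Finset.mul_sum, Complex.exp_sum]
  refine Finset.prod_congr rfl fun i _ => ?_
  have h1 : ((((u i).val * (x i).val : ℕ) : ℤ) : ZMod (d i)) = u i * x i := by
    push_cast
    rw [ZMod.natCast_val, ZMod.natCast_val, ZMod.cast_id, ZMod.cast_id]
  rw [← h1, ZMod.stdAddChar_coe]
  congr 1
  push_cast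
  ring

lemma chi_zero_left (x : ∀ i, ZMod (d i)) : chi 0 x = 1 := by
  simp [chi_eq_prod]

lemma chi_add_right (u a b : ∀ i, ZMod (d i)) :
    chi u (a + b) = chi u a * chi u b := by
  simp_rw [chi_eq_prod, Pi.add_apply, mul_add, AddChar.map_add_eq_mul,
    Finset.prod_mul_distrib]

lemma sum_chi (x : ∀ i, ZMod (d i)) :
    ∑ u : ∀ i, ZMod (d i), chi u x
      = if x = 0 then ((∏ i, d i : ℕ) : ℂ) else 0 := by
  classical
  simp_rw [chi_eq_prod]
  rw [← Fintype.piFinset_univ,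
    ← Finset.prod_univ_sum (fun _ => Finset.univ) (fun i t => ZMod.stdAddChar (t * x i))]
  have hterm : ∀ i, ∑ t : ZMod (d i), ZMod.stdAddChar (t * x i)
      = if x i = 0 then ((d i : ℕ) : ℂ) else 0 := by
    intro i
    rw [AddChar.sum_mulShift _ (ZMod.isPrimitive_stdAddChar (d i))]
    simp [ZMod.card]
  simp_rw [hterm]
  by_cases hx : x = 0
  · subst hx; simp
  · rw [if_neg hx]
    obtain ⟨i, hi⟩ : ∃ i, x i ≠ 0 := by
      contrapose! hx; funext i; exact hx i
    exact Finset.prod_eq_zero (Finset.mem_univ i) (by rw [if_neg hi])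

lemma mem_of_chi_eq_one (K : AddSubgroup (∀ i, ZMod (d i))) (g : ∀ i, ZMod (d i))
    (h : ∀ u, (∀ x ∈ K, chi u x = 1) → chi u g = 1) : g ∈ K := by
  classical
  by_contra hg
  set Kf : Finset (∀ i, ZMod (d i)) := Finset.univ.filter (· ∈ K) with hKf
  have ha : ∀ u, (∑ x ∈ Kf, chi u x)
      = if (∀ x ∈ K, chi u x = 1) then (Kf.card : ℂ) else 0 := by
    intro u
    split_ifs with hcase
    · rw [Finset.sum_congr rfl fun x hx => hcase x (by simpa [hKf] using hx)]
      simp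
    · push_neg at hcase
      obtain ⟨x0, hx0K, hx0⟩ := hcase
      have hshift : ∑ x ∈ Kf, chi u (x0 + x) = ∑ x ∈ Kf, chi u x := by
        refine Finset.sum_equiv (Equiv.addLeft x0) (fun i => ?_) (fun i _ => ?_)
        · simp [hKf, K.add_mem_cancel_left hx0K]
        · simp
      have hzero : (chi u x0 - 1) * ∑ x ∈ Kf, chi u x = 0 := by
        rw [sub_mul, one_mul, sub_eq_zero, Finset.mul_sum]
        simpa [chi_add_right] using hshift
      rcases mul_eq_zero.mp hzero with h1 | h2
      · exact absurd (by linear_combination h1) hx0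
      · exact h2
  have hS2 : ∑ u : ∀ i, ZMod (d i), (∑ x ∈ Kf, chi u x) * chi u g = 0 := by
    simp_rw [Finset.sum_mul, ← chi_add_right]
    rw [Finset.sum_comm]
    refine Finset.sum_eq_zero fun x hx => ?_
    rw [sum_chi, if_neg]
    intro hxg
    exact hg (by
      have hxK : x ∈ K := by simpa [hKf] using hx
      have : g = -x := eq_neg_of_add_eq_zero_right hxg
      exact this ▸ K.neg_mem hxK)
  have hS1 : ∑ u : ∀ i, ZMod (d i), (∑ x ∈ Kf, chi u x) * chi u g
      = ((Finset.univ.filter fun u => ∀ x ∈ K, chi u x = 1).card : ℂ) * Kf.card := by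
    simp_rw [ha, ite_mul, zero_mul]
    rw [← Finset.sum_filter]
    rw [Finset.sum_congr rfl fun u hu => by
      rw [h u (Finset.mem_filter.mp hu).2, mul_one]]
    rw [Finset.sum_const, nsmul_eq_mul]
  rw [hS2] at hS1
  have hO : (0 : ∀ i, ZMod (d i)) ∈ Finset.univ.filter fun u => ∀ x ∈ K, chi u x = 1 := by
    simp [chi_zero_left]
  have hK0 : (0 : ∀ i, ZMod (d i)) ∈ Kf := by simp [hKf, K.zero_mem]
  have hc1 : ((Finset.univ.filter fun u => ∀ x ∈ K, chi u x = 1).card : ℂ) ≠ 0 := by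
    exact_mod_cast Finset.card_ne_zero_of_mem hO
  have hc2 : ((Kf.card : ℕ) : ℂ) ≠ 0 := by
    exact_mod_cast Finset.card_ne_zero_of_mem hK0
  exact (mul_ne_zero hc1 hc2) hS1.symm

end Aux

/-- If `ψ : G → ℂ` satisfies `χ_u(g) ψ(g+v) = ψ(g)` for all `u ∈ K^⊥`, `v ∈ K`, `g ∈ G`
(i.e. `ψ` is a common `+1` eigenvector of all `Z(u)X(v)` with `u ∈ K^⊥`, `v ∈ K`), then
`ψ` is proportional to the indicator function of the subgroup `K`. -/
theorem stmt_16 (m : ℕ) (hm : 0 < m) (d : Fin m → ℕ) [∀ i, NeZero (d i)]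
    (K : AddSubgroup (∀ i, ZMod (d i))) (ψ : (∀ i, ZMod (d i)) → ℂ)
    (hψ : ∀ u ∈ {u : ∀ i, ZMod (d i) | ∀ h ∈ K, chi u h = 1}, ∀ v ∈ K,
      ∀ g : ∀ i, ZMod (d i), chi u g * ψ (g + v) = ψ g) :
    ∃ c : ℂ, (∀ g ∈ K, ψ g = c) ∧ ∀ g ∉ K, ψ g = 0 := by
  refine ⟨ψ 0, fun g hg => ?_, fun g hg => ?_⟩
  · have h0 : (0 : ∀ i, ZMod (d i)) ∈ {u : ∀ i, ZMod (d i) | ∀ h ∈ K, chi u h = 1} :=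
      fun h _ => chi_zero_left h
    have := hψ 0 h0 g hg 0
    rwa [chi_zero_left, one_mul, zero_add] at this
  · by_contra hne
    have key : ∀ u, (∀ x ∈ K, chi u x = 1) → chi u g = 1 := by
      intro u hu
      have := hψ u hu 0 K.zero_mem g
      rw [add_zero] at this
      exact mul_right_cancel₀ hne (by rw [this, one_mul])
    exact hg (mem_of_chi_eq_one K g key)
end
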